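/- Let v and u be words with |v| < |u| which are not powers of a common word, with v a suffix of u. Let s be the maximal common suffix of v^∞ and v^∞u (which is finite). Then s is a suffix of every left-infinite concatenation of u and v. -/

import Mathlib

/-- The `k`-fold concatenation of the word `v` with itself. -/
def wpow {A : Type*} (v : List A) (k : ℕ) : List A := (List.replicate k v).flatten

/-- `s` is a (finite) suffix of the left-infinite word `x`, where `x n` denotes the
letter of `x` at distance `n` from the right end (`x 0` is the last letter). -/
def LSuffix {A : Type*} (s : List A) (x : ℕ → A) : Prop :=
  ∀ i, i < s.length → s.reverse[i]? = some (x i)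

/-!
Let `x = v^∞` and `y = v^∞ u`; `x` has period `|v|`. If `x` and `y` agreed on their last
`|u| + |v|` letters, `x` would also have period `|u|`, hence period `gcd |u| |v|`, and `u`, `v`
would be powers of the suffix of `x` of that length. So `s` is shorter than `vu`, hence a suffix
of `vu`. A concatenation of `u` and `v` is either `v^∞ = x`, or ends in `v u v^m` (at its first
`u` from the right, whose left neighbour ends in `v`). As `s` is a suffix of the `|v|`-periodic
word `x`, appending copies of `v` to a word ending in `s` keeps it ending in `s`.
-/

open Function

section

variable {A : Type*}

theorem wpow_succ (v : List A) (k : ℕ) : wpow v (k + 1) = wpow v k ++ v := by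
  simp [wpow, List.replicate_succ']

theorem length_wpow (v : List A) (k : ℕ) : (wpow v k).length = k * v.length := by
  simp [wpow, List.sum_replicate]

theorem lsuffix_nil (x : ℕ → A) : LSuffix [] x := fun _ h => absurd h (Nat.not_lt_zero _)

theorem lsuffix_append_iff {a b : List A} {x : ℕ → A} :
    LSuffix (a ++ b) x ↔ LSuffix b x ∧ LSuffix a (fun n => x (n + b.length)) := by
  simp only [LSuffix, List.reverse_append, List.length_append]
  constructor
  · intro h
    refine ⟨fun i hi => ?_, fun i hi => ?_⟩
    · rw [← List.getElem?_append_left (by simpa using hi)]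
      exact h i (by omega)
    · simpa [List.getElem?_append_right] using h (i + b.length) (by omega)
  · rintro ⟨hb, ha⟩ i hi
    by_cases hib : i < b.length
    · rw [List.getElem?_append_left (by simpa using hib)]
      exact hb i hib
    · rw [List.getElem?_append_right (by simp; omega), List.length_reverse]
      simpa [Nat.sub_add_cancel (not_lt.1 hib)] using ha (i - b.length) (by omega)

theorem LSuffix.of_suffix {a b : List A} {x : ℕ → A} (ha : LSuffix a x) (hba : b <:+ a) :
    LSuffix b x := by
  obtain ⟨t, rfl⟩ := hba
  exact (lsuffix_append_iff.1 ha).1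

theorem LSuffix.eq_of_lt {s : List A} {x y : ℕ → A} (hx : LSuffix s x) (hy : LSuffix s y)
    {i : ℕ} (hi : i < s.length) : x i = y i :=
  Option.some.inj ((hx i hi).symm.trans (hy i hi))

theorem LSuffix.suffix_of_length_le {a b : List A} {x : ℕ → A} (ha : LSuffix a x)
    (hb : LSuffix b x) (hab : a.length ≤ b.length) : a <:+ b := by
  rw [← List.reverse_prefix, List.prefix_iff_getElem?]
  intro i hi
  rw [List.length_reverse] at hi
  rw [hb i (by omega), ← List.getElem?_eq_getElem, ha i hi]

theorem eq_of_forall_lsuffix_wpow {v : List A} (hv : v ≠ []) {x x' : ℕ → A}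
    (hx : ∀ k, LSuffix (wpow v k) x) (hx' : ∀ k, LSuffix (wpow v k) x') : x = x' := by
  funext n
  have hn : n < (wpow v (n + 1)).length := by
    rw [length_wpow]
    nlinarith [List.length_pos_iff.2 hv]
  exact (hx (n + 1)).eq_of_lt (hx' (n + 1)) hn

theorem periodic_of_forall_lsuffix_wpow {v : List A} (hv : v ≠ []) {x : ℕ → A}
    (hx : ∀ k, LSuffix (wpow v k) x) : Periodic x v.length :=
  congrFun <| eq_of_forall_lsuffix_wpow hv
    (fun k => (lsuffix_append_iff.1 (wpow_succ v k ▸ hx (k + 1))).2) hx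

theorem Function.Periodic.lsuffix_wpow {w : List A} {x : ℕ → A} (hx : Periodic x w.length)
    (hw : LSuffix w x) (k : ℕ) : LSuffix (wpow w k) x := by
  induction k with
  | zero => simpa [wpow] using lsuffix_nil x
  | succ k ih =>
    rw [wpow_succ, lsuffix_append_iff, show (fun n => x (n + w.length)) = x from funext hx]
    exact ⟨hw, ih⟩

theorem Function.Periodic.gcd {f : ℕ → A} {p q : ℕ} (hp : Periodic f p) (hq : Periodic f q) :
    Periodic f (p.gcd q) := by
  -- Periods of `f` are its periods as a point of the shift map, so `IsPeriodicPt.gcd` applies.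
  let shift : (ℕ → A) → ℕ → A := fun g n => g (n + 1)
  have iterate_shift (k : ℕ) : shift^[k] f = fun n => f (n + k) := by
    induction k with
    | zero => rfl
    | succ k ih =>
      rw [iterate_succ_apply', ih]
      funext n
      simp only [shift]
      congr 1
      omega
  have isPeriodicPt_iff (k : ℕ) : IsPeriodicPt shift k f ↔ Periodic f k := by
    rw [IsPeriodicPt, IsFixedPt, iterate_shift, funext_iff]
    rfl
  exact (isPeriodicPt_iff _).1 (((isPeriodicPt_iff p).2 hp).gcd ((isPeriodicPt_iff q).2 hq))

theorem Function.Periodic.periodic_of_forall_lt {f : ℕ → A} {p q : ℕ} (hp : Periodic f p)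
    (hp0 : 0 < p) (hq : ∀ j < p, f (j + q) = f j) : Periodic f q := fun n =>
  calc f (n + q) = f ((n % p + q) % p) := by rw [Nat.mod_add_mod, hp.map_mod_nat]
    _ = f (n % p) := by rw [hp.map_mod_nat, hq _ (Nat.mod_lt _ hp0)]
    _ = f n := hp.map_mod_nat n

theorem Function.Periodic.eq_wpow {w L : List A} {x : ℕ → A} (hx : Periodic x w.length)
    (hw : LSuffix w x) (hL : LSuffix L x) (hdvd : w.length ∣ L.length) :
    L = wpow w (L.length / w.length) := by
  have hlen : (wpow w (L.length / w.length)).length = L.length := by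
    rw [length_wpow, Nat.div_mul_cancel hdvd]
  exact (hL.suffix_of_length_le (hx.lsuffix_wpow hw _) hlen.ge).eq_of_length hlen.symm

theorem exists_eq_wpow_of_periodic {u v : List A} (hu : u ≠ []) (hv : v ≠ []) {x : ℕ → A}
    (hx : Periodic x v.length) (hvx : LSuffix v x) (hux : LSuffix u x)
    (hshift : ∀ j < v.length, x (j + u.length) = x j) :
    ∃ (w : List A) (t r : ℕ), 0 < t ∧ 0 < r ∧ u = wpow w t ∧ v = wpow w r := by
  have hu0 := List.length_pos_iff.2 hu
  have hv0 := List.length_pos_iff.2 hv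
  set d := u.length.gcd v.length
  set w := v.drop (v.length - d)
  have hwd : w.length = d := by
    simp only [w, List.length_drop]
    have := Nat.gcd_le_right u.length hv0
    omega
  have hd0 : 0 < d := Nat.gcd_pos_of_pos_right _ hv0
  have hwx : Periodic x w.length := hwd ▸ (hx.periodic_of_forall_lt hv0 hshift).gcd hx
  have hw : LSuffix w x := hvx.of_suffix (List.drop_suffix _ _)
  refine ⟨w, u.length / d, v.length / d, Nat.div_pos (Nat.gcd_le_left _ hu0) hd0,
    Nat.div_pos (Nat.gcd_le_right _ hv0) hd0, ?_, ?_⟩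
  · exact hwd ▸ hwx.eq_wpow hw hux (hwd ▸ Nat.gcd_dvd_left _ _)
  · exact hwd ▸ hwx.eq_wpow hw hvx (hwd ▸ Nat.gcd_dvd_right _ _)

theorem LSuffix.suffix_append_wpow {s v W : List A} {x : ℕ → A} (hs : LSuffix s x)
    (hx : Periodic x v.length) (hvx : LSuffix v x) (hsW : s <:+ W) (m : ℕ) :
    s <:+ W ++ wpow v m := by
  induction m with
  | zero => simpa [wpow] using hsW
  | succ m ih =>
    rw [wpow_succ, ← List.append_assoc]
    rcases le_total s.length v.length with hsv | hvs
    · exact List.suffix_append_of_suffix (hs.suffix_of_length_le hvx hsv)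
    · obtain ⟨s', rfl⟩ := hvx.suffix_of_length_le hs hvs
      have hs' : LSuffix s' x := by
        simpa [show (fun n => x (n + v.length)) = x from funext hx] using
          (lsuffix_append_iff.1 hs).2
      exact List.suffix_append_self_iff.2 ((hs'.suffix_of_length_le hs (by simp)).trans ih)

theorem flatten_reverse_map_range_succ (c : ℕ → List A) (k : ℕ) :
    ((List.range (k + 1)).map c).reverse.flatten
      = c k ++ ((List.range k).map c).reverse.flatten := by
  simp [List.range_succ]

theorem flatten_reverse_map_range_eq_wpow {c : ℕ → List A} {v : List A} {k : ℕ}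
    (h : ∀ i < k, c i = v) : ((List.range k).map c).reverse.flatten = wpow v k := by
  have hmap : (List.range k).map c = List.replicate k v :=
    List.eq_replicate_iff.2 ⟨by simp, by simpa using h⟩
  rw [hmap, List.reverse_replicate, wpow]

theorem forall_lsuffix_wpow_or_exists_lsuffix_append_wpow {u v : List A} (hsuf : v <:+ u)
    {z : ℕ → A} {c : ℕ → List A} (hc : ∀ i, c i = u ∨ c i = v)
    (hz : ∀ k, LSuffix (((List.range (k + 1)).map c).reverse.flatten) z) :
    (∀ k, LSuffix (wpow v k) z) ∨ ∃ m, LSuffix (v ++ u ++ wpow v m) z := by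
  by_cases hall : ∀ i, c i = v
  · left
    rintro (_ | k)
    · exact lsuffix_nil z
    · simpa [flatten_reverse_map_range_eq_wpow fun i _ => hall i] using hz k
  · right
    classical
    obtain ⟨j, hj⟩ := not_forall.1 hall
    have hex : ∃ m, c m = u := ⟨j, (hc j).resolve_right hj⟩
    have hv : ∀ i < Nat.find hex, c i = v := fun i hi => (hc i).resolve_left (Nat.find_min hex hi)
    refine ⟨Nat.find hex, ?_⟩
    have h := hz (Nat.find hex + 1)
    rw [flatten_reverse_map_range_succ, flatten_reverse_map_range_succ,
      flatten_reverse_map_range_eq_wpow hv, Nat.find_spec hex] at h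
    refine h.of_suffix ?_
    rw [List.append_assoc, List.suffix_append_self_iff]
    rcases hc (Nat.find hex + 1) with h' | h' <;> rw [h']
    exact hsuf

end

theorem common_suffix_of_concatenations_general {A : Type*} (u v s : List A)
    (hv : v ≠ [])
    (hsuf : v <:+ u)
    (hnp : ¬ ∃ (w : List A) (t r : ℕ), 0 < t ∧ 0 < r ∧ u = wpow w t ∧ v = wpow w r)
    (x y : ℕ → A)
    -- `x` is the left-infinite word `v^∞`
    (hx : ∀ k : ℕ, LSuffix (wpow v k) x)
    -- `y` is the left-infinite word `v^∞ u`
    (hy : ∀ k : ℕ, LSuffix (wpow v k ++ u) y)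
    -- `s` is the maximal common suffix of `x` and `y`
    (hsx : LSuffix s x) (hsy : LSuffix s y)
    -- `z` is a left-infinite concatenation of `u` and `v`
    (z : ℕ → A) (c : ℕ → List A) (hc : ∀ i, c i = u ∨ c i = v)
    (hz : ∀ k : ℕ, LSuffix (((List.range (k+1)).map c).reverse.flatten) z) :
    LSuffix s z := by
  have hxv : Periodic x v.length := periodic_of_forall_lsuffix_wpow hv hx
  have hvx : LSuffix v x := by simpa [wpow] using hx 1
  have hvuy : LSuffix (v ++ u) y := by simpa [wpow] using hy 1
  have hs : s.length < (v ++ u).length := by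
    by_contra! hle
    rw [List.length_append] at hle
    have hyx : (fun n => y (n + u.length)) = x :=
      eq_of_forall_lsuffix_wpow hv (fun k => (lsuffix_append_iff.1 (hy k)).2) hx
    have hus : u <:+ s :=
      (lsuffix_append_iff.1 hvuy).1.suffix_of_length_le hsy (by omega)
    refine hnp (exists_eq_wpow_of_periodic ?_ hv hxv hvx (hsx.of_suffix hus) fun j hj => ?_)
    · exact List.ne_nil_of_length_pos ((List.length_pos_iff.2 hv).trans_le hsuf.length_le)
    · rw [hsx.eq_of_lt hsy (by omega)]
      exact congrFun hyx j
  have hsvu : s <:+ v ++ u := hsy.suffix_of_length_le hvuy hs.le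
  rcases forall_lsuffix_wpow_or_exists_lsuffix_append_wpow hsuf hc hz with hzx | ⟨m, hm⟩
  · rwa [← eq_of_forall_lsuffix_wpow hv hx hzx]
  · exact hm.of_suffix (hsx.suffix_append_wpow hxv hvx hsvu m)

/-- Let `|v| < |u|`, with `u` and `v` not powers of a common word and `v` a suffix
of `u`.  Let `s` be the maximal common suffix of `v^∞` and `v^∞u`.  Then `s` is a
suffix of every left-infinite concatenation of `u` and `v`. -/
theorem common_suffix_of_concatenations {A : Type*} (u v s : List A)
    (hv : v ≠ []) (hlen : v.length < u.length)
    (hsuf : v <:+ u)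
    (hnp : ¬ ∃ (w : List A) (t r : ℕ), 0 < t ∧ 0 < r ∧ u = wpow w t ∧ v = wpow w r)
    (x y : ℕ → A)
    -- `x` is the left-infinite word `v^∞`
    (hx : ∀ k : ℕ, LSuffix (wpow v k) x)
    -- `y` is the left-infinite word `v^∞ u`
    (hy : ∀ k : ℕ, LSuffix (wpow v k ++ u) y)
    -- `s` is the maximal common suffix of `x` and `y`
    (hsx : LSuffix s x) (hsy : LSuffix s y)
    (hmax : ∀ s' : List A, LSuffix s' x → LSuffix s' y → s'.length ≤ s.length)
    -- `z` is a left-infinite concatenation of `u` and `v`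
    (z : ℕ → A) (c : ℕ → List A) (hc : ∀ i, c i = u ∨ c i = v)
    (hz : ∀ k : ℕ, LSuffix (((List.range (k+1)).map c).reverse.flatten) z) :
    LSuffix s z :=
  common_suffix_of_concatenations_general u v s hv hsuf hnp x y hx hy hsx hsy z c hc hz
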